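/- arXiv:2108.12851 — 2 statements merged into one kernel-verified Lean document; each statement's English description precedes it below -/
import Mathlib

section
/- Let h : ℝ → ℝ be thrice differentiable with h', h'', h''' ∈ L¹(ℝ), all vanishing at infinity, and suppose the Fourier transform of h' is integrable. Then for any 0 < λ₁ < λ₂, the quantity C_h := (1/√(2π)) ∫_ℝ |ĥ'(ω)| dω satisfies C_h ≤ √(2/π) · ( ‖h'‖₁ λ₁ + ‖h''‖₁ log(λ₂/λ₁) + ‖h'''‖₁ / λ₂ ). -/
/-!
Integrating by parts multiplies the Fourier transform by `iω`, so `|ĥ'(ω)|` is bounded by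
`‖h'‖₁ / √(2π)`, by `‖h''‖₁ / (√(2π) |ω|)` and by `‖h'''‖₁ / (√(2π) ω²)`. Since `|ĥ'|` is even,
integrating the first bound over `|ω| ≤ λ₁`, the second over `λ₁ < |ω| ≤ λ₂` and the third over
`|ω| > λ₂` gives `C_h ≤ (1/π) (‖h'‖₁ λ₁ + ‖h''‖₁ log (λ₂/λ₁) + ‖h'''‖₁ / λ₂)`, and `1/π ≤ √(2/π)`.
-/

open MeasureTheory Set

noncomputable def FT (g : ℝ → ℝ) (ω : ℝ) : ℂ :=
  (Real.sqrt (2 * Real.pi) : ℂ)⁻¹ * ∫ x : ℝ, (g x : ℂ) * Complex.exp (-(Complex.I * ω * x))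

theorem FT_eq_fourier (g : ℝ → ℝ) (ω : ℝ) :
    FT g ω = (Real.sqrt (2 * Real.pi) : ℂ)⁻¹ *
      FourierTransform.fourier (fun x => (g x : ℂ)) (ω / (2 * Real.pi)) := by
  unfold FT
  rw [Real.fourier_real_eq_integral_exp_smul]
  congr 1
  congr 1 with x
  rw [smul_eq_mul, mul_comm]
  congr 2
  push_cast
  have hπ : (Real.pi : ℂ) ≠ 0 := by exact_mod_cast Real.pi_ne_zero
  field_simp

theorem norm_FT_le (g : ℝ → ℝ) (ω : ℝ) :
    ‖FT g ω‖ ≤ (Real.sqrt (2 * Real.pi))⁻¹ * ∫ x, |g x| := by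
  unfold FT
  rw [norm_mul, norm_inv, Complex.norm_real, Real.norm_of_nonneg (Real.sqrt_nonneg _)]
  refine mul_le_mul_of_nonneg_left ((norm_integral_le_integral_norm _).trans_eq ?_)
    (inv_nonneg.mpr (Real.sqrt_nonneg _))
  refine integral_congr_ae (Filter.Eventually.of_forall fun x => ?_)
  simp [Complex.norm_exp]

theorem norm_FT_neg (g : ℝ → ℝ) (ω : ℝ) : ‖FT g (-ω)‖ = ‖FT g ω‖ := by
  have hconj : FT g (-ω) = (starRingEnd ℂ) (FT g ω) := by
    unfold FT
    rw [map_mul, ← integral_conj]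
    congr 1
    · simp
    · congr 1 with x
      rw [map_mul, Complex.conj_ofReal, ← Complex.exp_conj]
      congr 2
      simp only [map_neg, map_mul, Complex.conj_I, Complex.conj_ofReal]
      push_cast
      ring
  rw [hconj, RCLike.norm_conj]

theorem FT_of_hasDerivAt {g g' : ℝ → ℝ} (hd : ∀ x, HasDerivAt g (g' x) x)
    (hg : Integrable g) (hg' : Integrable g') (ω : ℝ) :
    FT g' ω = (Complex.I * ω) * FT g ω := by
  have hderiv : deriv (fun x => (g x : ℂ)) = fun x => (g' x : ℂ) :=
    funext fun x => (hd x).ofReal_comp.deriv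
  have hfourier := Real.fourier_deriv hg.ofReal (fun x => (hd x).ofReal_comp.differentiableAt)
    (hderiv ▸ hg'.ofReal)
  rw [hderiv] at hfourier
  rw [FT_eq_fourier, FT_eq_fourier, hfourier]
  simp only [smul_eq_mul]
  have hπ : (Real.pi : ℂ) ≠ 0 := by exact_mod_cast Real.pi_ne_zero
  push_cast
  field_simp

theorem norm_FT_of_hasDerivAt {g g' : ℝ → ℝ} (hd : ∀ x, HasDerivAt g (g' x) x)
    (hg : Integrable g) (hg' : Integrable g') (ω : ℝ) :
    ‖FT g' ω‖ = |ω| * ‖FT g ω‖ := by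
  rw [FT_of_hasDerivAt hd hg hg', norm_mul, norm_mul, Complex.norm_I, one_mul,
    Complex.norm_real, Real.norm_eq_abs]

theorem norm_FT_le_div_abs {g g' : ℝ → ℝ} (hd : ∀ x, HasDerivAt g (g' x) x)
    (hg : Integrable g) (hg' : Integrable g') {ω : ℝ} (hω : ω ≠ 0) :
    ‖FT g ω‖ ≤ (Real.sqrt (2 * Real.pi))⁻¹ * (∫ x, |g' x|) / |ω| := by
  rw [le_div_iff₀ (abs_pos.mpr hω), mul_comm, ← norm_FT_of_hasDerivAt hd hg hg']
  exact norm_FT_le g' ω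

theorem norm_FT_le_div_sq {g g' g'' : ℝ → ℝ} (hd : ∀ x, HasDerivAt g (g' x) x)
    (hd' : ∀ x, HasDerivAt g' (g'' x) x) (hg : Integrable g) (hg' : Integrable g')
    (hg'' : Integrable g'') {ω : ℝ} (hω : ω ≠ 0) :
    ‖FT g ω‖ ≤ (Real.sqrt (2 * Real.pi))⁻¹ * (∫ x, |g'' x|) / ω ^ 2 := by
  rw [le_div_iff₀ (by positivity), mul_comm, ← sq_abs, sq, mul_assoc,
    ← norm_FT_of_hasDerivAt hd hg hg', ← norm_FT_of_hasDerivAt hd' hg' hg'']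
  exact norm_FT_le g'' ω

theorem integral_eq_two_mul_setIntegral_Ioi_of_even {F : ℝ → ℝ} (heven : ∀ x, F (-x) = F x) :
    ∫ x, F x = 2 * ∫ x in Ioi 0, F x := by
  have habs : (fun x => F |x|) = F := funext fun x => by
    rcases abs_choice x with h | h <;> simp [h, heven]
  rw [← integral_comp_abs, habs]

theorem setIntegral_Ioi_eq_Ioc_add_Ioi {F : ℝ → ℝ} {s t : ℝ} (hF : IntegrableOn F (Ioi s))
    (hst : s ≤ t) : ∫ ω in Ioi s, F ω = (∫ ω in Ioc s t, F ω) + ∫ ω in Ioi t, F ω := by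
  rw [← Ioc_union_Ioi_eq_Ioi hst] at hF ⊢
  exact setIntegral_union (Ioc_disjoint_Ioi le_rfl) measurableSet_Ioi
    hF.left_of_union hF.right_of_union

theorem setIntegral_Ioc_le_mul_of_le {F : ℝ → ℝ} {s t a : ℝ} (hF : IntegrableOn F (Ioc s t))
    (hst : s ≤ t) (ha : ∀ ω ∈ Ioc s t, F ω ≤ a) :
    ∫ ω in Ioc s t, F ω ≤ a * (t - s) := by
  calc ∫ ω in Ioc s t, F ω ≤ ∫ _ in Ioc s t, a :=
        setIntegral_mono_on hF (integrableOn_const measure_Ioc_lt_top.ne) measurableSet_Ioc ha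
    _ = a * (t - s) := by
        rw [setIntegral_const, Real.volume_real_Ioc_of_le hst, smul_eq_mul, mul_comm]

theorem setIntegral_Ioc_le_mul_log_of_le_div {F : ℝ → ℝ} {s t b : ℝ}
    (hF : IntegrableOn F (Ioc s t)) (hs : 0 < s) (hst : s ≤ t)
    (hb : ∀ ω ∈ Ioc s t, F ω ≤ b / ω) :
    ∫ ω in Ioc s t, F ω ≤ b * Real.log (t / s) := by
  have hbω : IntegrableOn (fun ω : ℝ => b / ω) (Ioc s t) :=
    (continuousOn_const.div continuousOn_id fun ω hω => (hs.trans_le hω.1).ne').integrableOn_Icc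
      |>.mono_set Ioc_subset_Icc_self
  have h0 : (0 : ℝ) ∉ uIcc s t := by
    rw [uIcc_of_le hst]
    exact fun hω => hs.not_ge hω.1
  calc ∫ ω in Ioc s t, F ω ≤ ∫ ω in Ioc s t, b / ω :=
        setIntegral_mono_on hF hbω measurableSet_Ioc hb
    _ = b * Real.log (t / s) := by
        simp_rw [← intervalIntegral.integral_of_le hst, div_eq_mul_inv b,
          intervalIntegral.integral_const_mul, integral_inv h0]

theorem setIntegral_Ioi_le_div_of_le_div_sq {F : ℝ → ℝ} {s c : ℝ} (hF : IntegrableOn F (Ioi s))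
    (hs : 0 < s) (hc : ∀ ω ∈ Ioi s, F ω ≤ c / ω ^ 2) :
    ∫ ω in Ioi s, F ω ≤ c / s := by
  have hpow : ∀ ω ∈ Ioi s, c / ω ^ 2 = c * ω ^ (-2 : ℝ) := fun ω hω => by
    rw [Real.rpow_neg (hs.trans hω).le, Real.rpow_two, div_eq_mul_inv]
  calc ∫ ω in Ioi s, F ω ≤ ∫ ω in Ioi s, c * ω ^ (-2 : ℝ) :=
        setIntegral_mono_on hF ((integrableOn_Ioi_rpow_of_lt (by norm_num) hs).const_mul c)
          measurableSet_Ioi fun ω hω => (hc ω hω).trans_eq (hpow ω hω)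
    _ = c / s := by
        rw [integral_const_mul, integral_Ioi_rpow_of_lt (by norm_num) hs]
        norm_num [Real.rpow_neg_one, div_eq_mul_inv]

theorem setIntegral_Ioi_zero_le_of_three_regimes {F : ℝ → ℝ} (hF : IntegrableOn F (Ioi 0))
    {a b c l₁ l₂ : ℝ} (hl₁ : 0 < l₁) (hl : l₁ ≤ l₂)
    (ha : ∀ ω ∈ Ioc 0 l₁, F ω ≤ a) (hb : ∀ ω ∈ Ioc l₁ l₂, F ω ≤ b / ω)
    (hc : ∀ ω ∈ Ioi l₂, F ω ≤ c / ω ^ 2) :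
    ∫ ω in Ioi 0, F ω ≤ a * l₁ + b * Real.log (l₂ / l₁) + c / l₂ := by
  have hF₁ : IntegrableOn F (Ioi l₁) := hF.mono_set (Ioi_subset_Ioi hl₁.le)
  have h₁ := setIntegral_Ioc_le_mul_of_le (hF.mono_set Ioc_subset_Ioi_self) hl₁.le ha
  have h₂ := setIntegral_Ioc_le_mul_log_of_le_div (hF₁.mono_set Ioc_subset_Ioi_self) hl₁ hl hb
  have h₃ := setIntegral_Ioi_le_div_of_le_div_sq (hF₁.mono_set (Ioi_subset_Ioi hl))
    (hl₁.trans_le hl) hc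
  rw [setIntegral_Ioi_eq_Ioc_add_Ioi hF hl₁.le, setIntegral_Ioi_eq_Ioc_add_Ioi hF₁ hl]
  linarith

theorem two_mul_inv_sqrt_two_pi_sq : 2 * (Real.sqrt (2 * Real.pi))⁻¹ ^ 2 = Real.pi⁻¹ := by
  rw [inv_pow, Real.sq_sqrt (by positivity)]
  field_simp

theorem inv_pi_le_sqrt_two_div_pi : Real.pi⁻¹ ≤ Real.sqrt (2 / Real.pi) := by
  rw [Real.le_sqrt' (by positivity)]
  field_simp
  nlinarith [Real.pi_gt_three]

theorem barron_three_regime_bound_general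
    (h₁ h₂ h₃ : ℝ → ℝ)
    (hd2 : ∀ x, HasDerivAt h₁ (h₂ x) x)
    (hd3 : ∀ x, HasDerivAt h₂ (h₃ x) x)
    (hi1 : Integrable h₁) (hi2 : Integrable h₂) (hi3 : Integrable h₃)
    (hFT : Integrable (fun ω => ‖FT h₁ ω‖))
    (lam₁ lam₂ : ℝ) (hlam : 0 < lam₁) (hlam' : lam₁ < lam₂) :
    (Real.sqrt (2 * Real.pi))⁻¹ * ∫ ω : ℝ, ‖FT h₁ ω‖ ≤
      Real.sqrt (2 / Real.pi) *
        ((∫ x, |h₁ x|) * lam₁ + (∫ x, |h₂ x|) * Real.log (lam₂ / lam₁)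
          + (∫ x, |h₃ x|) / lam₂) := by
  set S := Real.sqrt (2 * Real.pi)
  set X := (∫ x, |h₁ x|) * lam₁ + (∫ x, |h₂ x|) * Real.log (lam₂ / lam₁) + (∫ x, |h₃ x|) / lam₂
  have hX : 0 ≤ X := by
    have hlog := Real.log_nonneg ((one_le_div hlam).mpr hlam'.le)
    have hA : 0 ≤ ∫ x, |h₁ x| := integral_nonneg fun x => abs_nonneg _
    have hB : 0 ≤ ∫ x, |h₂ x| := integral_nonneg fun x => abs_nonneg _
    have hC : 0 ≤ ∫ x, |h₃ x| := integral_nonneg fun x => abs_nonneg _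
    exact add_nonneg (add_nonneg (mul_nonneg hA hlam.le) (mul_nonneg hB hlog))
      (div_nonneg hC (hlam.trans hlam').le)
  have hhalf : ∫ ω in Ioi 0, ‖FT h₁ ω‖ ≤ S⁻¹ * X := by
    have hbound := setIntegral_Ioi_zero_le_of_three_regimes hFT.integrableOn hlam hlam'.le
      (fun ω _ => norm_FT_le h₁ ω)
      (fun ω hω => (norm_FT_le_div_abs hd2 hi1 hi2 (hlam.trans hω.1).ne').trans_eq
        (by rw [abs_of_pos (hlam.trans hω.1)]))
      (fun ω hω => norm_FT_le_div_sq hd2 hd3 hi1 hi2 hi3 (hlam.trans (hlam'.trans hω)).ne')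
    exact hbound.trans_eq (by ring)
  calc S⁻¹ * ∫ ω, ‖FT h₁ ω‖ = S⁻¹ * (2 * ∫ ω in Ioi 0, ‖FT h₁ ω‖) := by
        rw [integral_eq_two_mul_setIntegral_Ioi_of_even (norm_FT_neg h₁)]
    _ ≤ S⁻¹ * (2 * (S⁻¹ * X)) := by gcongr
    _ = Real.pi⁻¹ * X := by rw [← two_mul_inv_sqrt_two_pi_sq]; ring
    _ ≤ Real.sqrt (2 / Real.pi) * X := by gcongr; exact inv_pi_le_sqrt_two_div_pi

/-- Three-regime bound for the Barron-type constant `C_h`. -/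
theorem barron_three_regime_bound
    (h h₁ h₂ h₃ : ℝ → ℝ)
    (hd1 : ∀ x, HasDerivAt h (h₁ x) x)
    (hd2 : ∀ x, HasDerivAt h₁ (h₂ x) x)
    (hd3 : ∀ x, HasDerivAt h₂ (h₃ x) x)
    (hi1 : Integrable h₁) (hi2 : Integrable h₂) (hi3 : Integrable h₃)
    (hv1t : Filter.Tendsto h₁ Filter.atTop (nhds 0))
    (hv1b : Filter.Tendsto h₁ Filter.atBot (nhds 0))
    (hv2t : Filter.Tendsto h₂ Filter.atTop (nhds 0))
    (hv2b : Filter.Tendsto h₂ Filter.atBot (nhds 0))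
    (hv3t : Filter.Tendsto h₃ Filter.atTop (nhds 0))
    (hv3b : Filter.Tendsto h₃ Filter.atBot (nhds 0))
    (hFT : Integrable (fun ω => ‖FT h₁ ω‖))
    (lam₁ lam₂ : ℝ) (hlam : 0 < lam₁) (hlam' : lam₁ < lam₂) :
    (Real.sqrt (2 * Real.pi))⁻¹ * ∫ ω : ℝ, ‖FT h₁ ω‖ ≤
      Real.sqrt (2 / Real.pi) *
        ((∫ x, |h₁ x|) * lam₁ + (∫ x, |h₂ x|) * Real.log (lam₂ / lam₁)
          + (∫ x, |h₃ x|) / lam₂) :=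
  barron_three_regime_bound_general h₁ h₂ h₃ hd2 hd3 hi1 hi2 hi3 hFT lam₁ lam₂ hlam hlam'
end

section
/- For any real-valued data (X₁,Y₁),…,(Xₙ,Yₙ) with Yᵢ ∈ {−1,+1}, any sigmoidal activation φ : ℝ → [−1,1] with limits ∓1 at ∓∞, and any k ≤ n with pairwise distinct X₁,…,Xₙ, the quantity mmse*_{k,n} := inf over h in the class H_k^φ of two-layer networks h(x) = c₀ + Σ_{l=1}^k c_l φ(a_l x + b_l) of (1/n) Σᵢ (Yᵢ − tanh(h(Xᵢ)))² satisfies mmse*_{k,n} ≤ 1 − k/n. -/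
/-!
Let the slope `A → ∞` with the thresholds fixed: `φ (A * (x - t))` tends to `±1` according to the
sign of `x - t`, so at the data points the network converges to a step function with `k` jumps.
Such step functions can take the value `M * Y i` at `k` of the points and `0` at the others, where
the loss of the limit is `(k * (1 - tanh M) ^ 2 + (n - k)) / n`; now let `M → ∞`.
-/

open Filter Finset Topology

namespace Real

theorem one_sub_tanh (x : ℝ) : 1 - tanh x = 2 / (exp (2 * x) + 1) := by
  have hexp : exp (2 * x) = exp x * exp x := by rw [two_mul, exp_add]
  rw [tanh_eq_sinh_div_cosh, sinh_eq, cosh_eq, exp_neg, hexp]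
  field_simp
  ring

theorem tendsto_tanh_atTop : Tendsto tanh atTop (𝓝 1) := by
  have h : Tendsto (fun x => 2 / (exp (2 * x) + 1)) atTop (𝓝 0) :=
    tendsto_const_nhds.div_atTop <| tendsto_atTop_add_const_right _ _ <|
      tendsto_exp_atTop.comp <| tendsto_id.const_mul_atTop two_pos
  simpa [← one_sub_tanh] using h.const_sub 1

theorem continuous_tanh : Continuous tanh :=
  (continuous_sinh.div continuous_cosh fun x => (cosh_pos x).ne').congr fun x =>
    (tanh_eq_sinh_div_cosh x).symm

end Real

-- Defined at `0` as well, so that no threshold needs to avoid the data points.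
noncomputable def stepLimit (φ : ℝ → ℝ) (z : ℝ) : ℝ :=
  if 0 < z then 1 else if z < 0 then -1 else φ 0

theorem tendsto_comp_mul_stepLimit {φ : ℝ → ℝ} (hφt : Tendsto φ atTop (𝓝 1))
    (hφb : Tendsto φ atBot (𝓝 (-1))) (z : ℝ) :
    Tendsto (fun A => φ (A * z)) atTop (𝓝 (stepLimit φ z)) := by
  rcases lt_trichotomy z 0 with hz | rfl | hz
  · simpa [stepLimit, hz, hz.not_gt, Function.comp_def] using
      hφb.comp (tendsto_id.atTop_mul_const_of_neg hz)
  · simp [stepLimit]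
  · simpa [stepLimit, hz, Function.comp_def] using hφt.comp (tendsto_id.atTop_mul_const hz)

theorem tendsto_network_stepLimit {φ : ℝ → ℝ} (hφt : Tendsto φ atTop (𝓝 1))
    (hφb : Tendsto φ atBot (𝓝 (-1))) {k : ℕ} (c₀ : ℝ) (t c : Fin k → ℝ) (x : ℝ) :
    Tendsto (fun A => c₀ + ∑ l, c l * φ (A * x + -(A * t l))) atTop
      (𝓝 (c₀ + ∑ l, c l * stepLimit φ (x - t l))) := by
  simp_rw [← mul_neg, ← mul_add, ← sub_eq_add_neg]
  exact tendsto_const_nhds.add <| tendsto_finsetSum _ fun l _ =>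
    (tendsto_comp_mul_stepLimit hφt hφb _).const_mul _

/-- Induction on `s` from its largest point: the new threshold goes just below it, and its
coefficient corrects the value there without disturbing the points below. -/
theorem exists_threshold_sum_eq_indicator {ι : Type*} [DecidableEq ι] {σ : ℝ → ℝ}
    (hpos : ∀ z, 0 < z → σ z = 1) (hneg : ∀ z, z < 0 → σ z = -1) {X : ι → ℝ} (v : ι → ℝ)
    (s : Finset ι) (hX : Set.InjOn X s) {k : ℕ} (hk : k ≤ s.card) :
    ∃ T ⊆ s, T.card = k ∧ ∃ (c₀ : ℝ) (t c : Fin k → ℝ),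
      ∀ i ∈ s, c₀ + ∑ l, c l * σ (X i - t l) = (T : Set ι).indicator v i := by
  induction s using Finset.induction_on_max_value X generalizing k with
  | empty =>
    obtain rfl : k = 0 := by simpa using hk
    exact ⟨∅, subset_refl _, rfl, 0, Fin.elim0, Fin.elim0, by simp⟩
  | insert a s ha hmax ih =>
    have hlt : ∀ i ∈ s, X i < X a := fun i hi => (hmax i hi).lt_of_ne fun h =>
      ha (hX (mem_insert_of_mem hi) (mem_insert_self a s) h ▸ hi)
    cases k with
    | zero => exact ⟨∅, empty_subset _, rfl, 0, Fin.elim0, Fin.elim0, by simp⟩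
    | succ k =>
      obtain ⟨T, hTs, hTk, c₀, t, c, hT⟩ := ih (hX.mono (by simp))
        (by simpa [card_insert_of_notMem ha] using hk)
      obtain ⟨t', hst', ht'a⟩ : ∃ t', (∀ i ∈ s, X i < t') ∧ t' < X a :=
        (((eventually_all_finset s).2 fun i hi => eventually_nhdsWithin_of_eventually_nhds
          (eventually_gt_nhds (hlt i hi))).and self_mem_nhdsWithin).exists (f := 𝓝[<] (X a))
      set c' := (v a - (c₀ + ∑ l, c l * σ (X a - t l))) / 2
      refine ⟨insert a T, insert_subset_insert a hTs,
        by rw [card_insert_of_notMem fun h => ha (hTs h), hTk], c₀ + c', Fin.cons t' t,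
        Fin.cons c' c, fun i hi => ?_⟩
      simp only [Fin.sum_univ_succ, Fin.cons_zero, Fin.cons_succ, coe_insert]
      rcases mem_insert.1 hi with rfl | hi
      · rw [hpos _ (sub_pos.2 ht'a), Set.indicator_of_mem (Set.mem_insert _ _)]
        ring
      · have hne : i ≠ a := fun h => ha (h ▸ hi)
        have hia : (insert a (T : Set ι)).indicator v i = (T : Set ι).indicator v i := by
          simp [Set.indicator_apply, hne]
        rw [hneg _ (sub_neg.2 (hst' i hi)), hia, ← hT i hi]
        ring

theorem sq_sub_tanh_mul_self {y : ℝ} (hy : y = -1 ∨ y = 1) (M : ℝ) :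
    (y - Real.tanh (M * y)) ^ 2 = (1 - Real.tanh M) ^ 2 := by
  rcases hy with rfl | rfl <;> simp [Real.tanh_neg]; ring

theorem sum_sq_sub_tanh_indicator {ι : Type*} [Fintype ι] {Y : ι → ℝ}
    (hY : ∀ i, Y i = -1 ∨ Y i = 1) (M : ℝ) (T : Finset ι) :
    ∑ i, (Y i - Real.tanh ((T : Set ι).indicator (fun i => M * Y i) i)) ^ 2
      = Fintype.card ι + T.card * ((1 - Real.tanh M) ^ 2 - 1) := by
  classical
  have hterm : ∀ i, (Y i - Real.tanh ((T : Set ι).indicator (fun i => M * Y i) i)) ^ 2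
      = 1 + if i ∈ T then (1 - Real.tanh M) ^ 2 - 1 else 0 := by
    intro i
    by_cases hi : i ∈ T
    · simp [hi, sq_sub_tanh_mul_self (hY i)]
    · rcases hY i with h | h <;> simp [hi, h]
  simp [hterm, sum_add_distrib]
  ring

theorem mmse_star_upper_general (n k : ℕ) (hn : 0 < n) (hk : k ≤ n)
    (X Y : Fin n → ℝ) (hX : Function.Injective X)
    (hY : ∀ i, Y i = -1 ∨ Y i = 1)
    (φ : ℝ → ℝ)
    (hφt : Filter.Tendsto φ Filter.atTop (nhds 1))
    (hφb : Filter.Tendsto φ Filter.atBot (nhds (-1))) :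
    sInf {r : ℝ | ∃ (c₀ : ℝ) (a b c : Fin k → ℝ),
        r = (1 / (n : ℝ)) *
          ∑ i, (Y i - Real.tanh (c₀ + ∑ l, c l * φ (a l * X i + b l)))^2}
      ≤ 1 - (k : ℝ) / n := by
  have hbound : Tendsto (fun M => 1 / (n : ℝ) * (n + k * ((1 - Real.tanh M) ^ 2 - 1))) atTop
      (𝓝 (1 - (k : ℝ) / n)) := by
    convert ((((Real.tendsto_tanh_atTop.const_sub 1).pow 2).sub_const 1).const_mul (k : ℝ)
      |>.const_add (n : ℝ)).const_mul (1 / (n : ℝ)) using 2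
    field_simp
    ring
  refine ge_of_tendsto' hbound fun M => ?_
  obtain ⟨T, -, hTk, c₀, t, c, hT⟩ := exists_threshold_sum_eq_indicator
    (σ := stepLimit φ) (fun z hz => if_pos hz) (fun z hz => by simp [stepLimit, hz, hz.not_gt])
    (fun i => M * Y i) univ hX.injOn (by simpa using hk)
  have hloss := (tendsto_finsetSum univ fun i _ => ((Real.continuous_tanh.tendsto _).comp
    (tendsto_network_stepLimit hφt hφb c₀ t c (X i))).const_sub (Y i) |>.pow 2).const_mul
    (1 / (n : ℝ))
  refine (ge_of_tendsto' hloss fun A => ?_).trans_eq ?_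
  · exact csInf_le ⟨0, by rintro _ ⟨c₀, a, b, c, rfl⟩; positivity⟩
      ⟨c₀, fun _ => A, fun l => -(A * t l), c, rfl⟩
  · rw [sum_congr rfl fun i hi => by rw [hT i hi], sum_sq_sub_tanh_indicator hY,
      Fintype.card_fin, hTk]

/-- Upper bound `1 − k/n` for the neural network MMSE estimator with
hyperbolic tangent output activation. -/
theorem mmse_star_upper (n k : ℕ) (hn : 0 < n) (hk : k ≤ n)
    (X Y : Fin n → ℝ) (hX : Function.Injective X)
    (hY : ∀ i, Y i = -1 ∨ Y i = 1)
    (φ : ℝ → ℝ) (hφ : ∀ z, φ z ∈ Set.Icc (-1:ℝ) 1)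
    (hφt : Filter.Tendsto φ Filter.atTop (nhds 1))
    (hφb : Filter.Tendsto φ Filter.atBot (nhds (-1))) :
    sInf {r : ℝ | ∃ (c₀ : ℝ) (a b c : Fin k → ℝ),
        r = (1 / (n : ℝ)) *
          ∑ i, (Y i - Real.tanh (c₀ + ∑ l, c l * φ (a l * X i + b l)))^2}
      ≤ 1 - (k : ℝ) / n :=
  mmse_star_upper_general n k hn hk X Y hX hY φ hφt hφb
end
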